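/- arXiv:math/0612070 — 4 statements merged into one kernel-verified Lean document; each statement's English description precedes it below -/
import Mathlib

section
/- Every median of the binomial distribution Binomial(n, k/n), with 1 ≤ k ≤ n integers, lies between k − 1 and k; in particular, P[X ≥ k] ≥ 1/2 for X ~ Binomial(n, k/n). -/
open scoped BigOperators

/-- Spectral norm: operator norm of a matrix as a map `ℓ₂ⁿ → ℓ₂ᵐ`. -/
noncomputable def specNorm {m n : ℕ} (A : Matrix (Fin m) (Fin n) ℂ) : ℝ :=
  ‖LinearMap.toContinuousLinearMap (Matrix.toEuclideanLin A)‖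

/-- Maximum Euclidean column norm, i.e. the `ℓ₁ → ℓ₂` operator norm. -/
noncomputable def colNorm {m n : ℕ} (A : Matrix (Fin m) (Fin n) ℂ) : ℝ :=
  ⨆ j, Real.sqrt (∑ i, ‖A i j‖ ^ 2)

/-- The diagonal 0–1 projector onto the coordinates in `s`. -/
def projOf {n : ℕ} (s : Finset (Fin n)) : Matrix (Fin n) (Fin n) ℂ :=
  Matrix.diagonal fun i => if i ∈ s then 1 else 0

/-- Diagonal 0–1 matrix determined by a boolean vector. -/
def bernM {n : ℕ} (f : Fin n → Bool) : Matrix (Fin n) (Fin n) ℂ :=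
  Matrix.diagonal fun i => if f i then 1 else 0

/-- Probability weight of the outcome `f` for i.i.d. Bernoulli(ρ) selectors. -/
noncomputable def bw {n : ℕ} (ρ : ℝ) (f : Fin n → Bool) : ℝ :=
  ∏ i, if f i then ρ else 1 - ρ

/-!
Put `w j = k ^ j (n - k) ^ (n - j) C(n, j)`, so that `P[X = j] = w j / n ^ n`. The theorem
reduces to `P[X < k] < 1/2 < P[X ≤ k]`, and the substitution `k ↦ n - k`, `j ↦ n - j` turns
each of these inequalities into the other one.

If `2k ≤ n`, the ratio `w (j + 1) / w j = k (n - j) / ((n - k) (j + 1))` gives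
`w (k - 1 - i) ≤ w (k + i)`, strictly for `i = 0`, and pairing terms yields
`P[X < k] < P[X ≥ k]`.

If `2k > n`, then `m = n - k` satisfies `2m < n`, and `P[X < k]` becomes `P_q[X > m]` for
`q = m / n`. The map `x ↦ P_x[X > m]` has derivative proportional to
`φ x = x ^ m (1 - x) ^ (n - m - 1)`, and `φ (q - t) ≤ φ (q + t)` for `0 ≤ t ≤ q` because
`x ↦ x log ((x + s) / (x - s))` is decreasing. Reflecting `[0, q]` at `q` gives
`∫₀^q φ < ∫_q^1 φ`, that is `P_q[X > m] < 1/2`.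
-/

open Finset Real

def binomWeight (n k j : ℕ) : ℕ := k ^ j * (n - k) ^ (n - j) * n.choose j

lemma sum_binomWeight {n k : ℕ} (hkn : k ≤ n) :
    ∑ j ∈ range (n + 1), binomWeight n k j = n ^ n := by
  simpa [binomWeight, Nat.add_sub_cancel' hkn] using (add_pow k (n - k) n).symm

lemma sum_range_add_sum_Ico_binomWeight {n k a : ℕ} (hkn : k ≤ n) (ha : a ≤ n + 1) :
    ∑ j ∈ range a, binomWeight n k j + ∑ j ∈ Ico a (n + 1), binomWeight n k j = n ^ n := by
  rw [sum_range_add_sum_Ico _ ha, sum_binomWeight hkn]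

lemma binomWeight_sub_sub {n k j : ℕ} (hkn : k ≤ n) (hjn : j ≤ n) :
    binomWeight n (n - k) (n - j) = binomWeight n k j := by
  rw [binomWeight, binomWeight, Nat.sub_sub_self hkn, Nat.sub_sub_self hjn, Nat.choose_symm hjn]
  ring

lemma sum_range_binomWeight_add_sum_range_binomWeight_sub {n k a : ℕ} (hkn : k ≤ n)
    (ha : a ≤ n + 1) :
    ∑ j ∈ range a, binomWeight n k j + ∑ j ∈ range (n + 1 - a), binomWeight n (n - k) j =
      n ^ n := by
  have hreflect : ∑ j ∈ range (n + 1 - a), binomWeight n (n - k) j =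
      ∑ j ∈ Ico a (n + 1), binomWeight n k j := by
    refine sum_nbij' (fun j => n - j) (fun j => n - j) ?_ ?_ ?_ ?_ ?_
    all_goals intro j hj; simp only [mem_range, mem_Ico] at hj ⊢
    · omega
    · omega
    · omega
    · omega
    · rw [← binomWeight_sub_sub hkn (by omega : n - j ≤ n),
        Nat.sub_sub_self (by omega : j ≤ n)]
  rw [hreflect, sum_range_add_sum_Ico_binomWeight hkn ha]

lemma binomWeight_succ_mul (n k j : ℕ) :
    binomWeight n k (j + 1) * ((n - k) * (j + 1)) = binomWeight n k j * (k * (n - j)) := by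
  rcases lt_or_ge j n with hjn | hnj
  · have hchoose := Nat.choose_succ_right_eq n j
    rw [binomWeight, binomWeight, show n - j = n - (j + 1) + 1 by omega]
    calc _ = k ^ (j + 1) * (n - k) ^ (n - (j + 1) + 1) * (n.choose (j + 1) * (j + 1)) := by ring
      _ = _ := by rw [hchoose, show n - j = n - (j + 1) + 1 by omega]; ring
  · simp [binomWeight, Nat.choose_eq_zero_of_lt (show n < j + 1 by omega),
      Nat.sub_eq_zero_of_le hnj]

lemma binomWeight_pred_lt {n k : ℕ} (hk : 1 ≤ k) (hkn : k < n) :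
    binomWeight n k (k - 1) < binomWeight n k k := by
  have hratio := binomWeight_succ_mul n k (k - 1)
  rw [Nat.sub_add_cancel hk, show n - (k - 1) = n - k + 1 by omega] at hratio
  have hpos : 0 < binomWeight n k (k - 1) :=
    Nat.mul_pos (Nat.mul_pos (by positivity) (Nat.pow_pos (by omega))) (Nat.choose_pos (by omega))
  refine lt_of_mul_lt_mul_right (a := (n - k) * k) ?_ (Nat.zero_le _)
  calc _ < binomWeight n k (k - 1) * (k * (n - k + 1)) := by
        rw [mul_comm (n - k)]; gcongr; omega
    _ = _ := by rw [← hratio]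

lemma binomWeight_sub_one_sub_le {n k : ℕ} (hkn : 2 * k ≤ n) :
    ∀ i < k, binomWeight n k (k - 1 - i) ≤ binomWeight n k (k + i) := by
  intro i
  induction i with
  | zero => intro hk; simpa using (binomWeight_pred_lt hk (by omega)).le
  | succ i ih =>
    intro hik
    have hlow := binomWeight_succ_mul n k (k - 2 - i)
    rw [show k - 2 - i + 1 = k - 1 - i by omega, show n - (k - 2 - i) = n - k + 2 + i by omega]
      at hlow
    have hhigh := binomWeight_succ_mul n k (k + i)
    rw [show n - (k + i) = n - k - i by omega] at hhigh
    have hratio :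
        (k - 1 - i) * (k + i + 1) * (n - k) ^ 2 ≤ (n - k - i) * (n - k + 2 + i) * k ^ 2 := by
      zify [show i ≤ k - 1 by omega, show 1 ≤ k by omega, show i ≤ n - k by omega,
        show k ≤ n by omega]
      nlinarith [mul_le_mul_of_nonneg_left (show (k : ℤ) ^ 2 ≤ (n - k) ^ 2 by gcongr; omega)
        (sq_nonneg ((i : ℤ) + 1)), sq_nonneg (k : ℤ)]
    have hpos : 0 < k * (n - k + 2 + i) * ((n - k) * (k + i + 1)) :=
      Nat.mul_pos (Nat.mul_pos (by omega) (by omega)) (Nat.mul_pos (by omega) (by omega))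
    refine Nat.le_of_mul_le_mul_right ?_ hpos
    rw [show k - 1 - (i + 1) = k - 2 - i by omega, ← add_assoc]
    calc binomWeight n k (k - 2 - i) * (k * (n - k + 2 + i) * ((n - k) * (k + i + 1)))
        = binomWeight n k (k - 1 - i) * ((k - 1 - i) * (k + i + 1) * (n - k) ^ 2) := by
          rw [← mul_assoc, ← hlow]; ring
      _ ≤ binomWeight n k (k + i) * ((n - k - i) * (n - k + 2 + i) * k ^ 2) :=
          Nat.mul_le_mul (ih (by omega)) hratio
      _ = binomWeight n k (k + i) * (k * (n - k - i)) * (k * (n - k + 2 + i)) := by ring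
      _ = _ := by rw [← hhigh]; ring

lemma sum_range_binomWeight_lt_sum_Ico {n k : ℕ} (hk : 1 ≤ k) (hkn : 2 * k ≤ n) :
    ∑ j ∈ range k, binomWeight n k j < ∑ j ∈ Ico k (n + 1), binomWeight n k j :=
  calc ∑ j ∈ range k, binomWeight n k j = ∑ i ∈ range k, binomWeight n k (k - 1 - i) :=
        (sum_range_reflect _ k).symm
    _ < ∑ i ∈ range k, binomWeight n k (k + i) :=
        sum_lt_sum (fun i hi => binomWeight_sub_one_sub_le hkn i (mem_range.1 hi))
          ⟨0, mem_range.2 hk, by simpa using binomWeight_pred_lt hk (by omega)⟩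
    _ = ∑ j ∈ Ico k (2 * k), binomWeight n k j := by
        rw [sum_Ico_eq_sum_range, two_mul, Nat.add_sub_cancel]
    _ ≤ ∑ j ∈ Ico k (n + 1), binomWeight n k j :=
        sum_le_sum_of_subset (Ico_subset_Ico le_rfl (by omega))

lemma cast_binomWeight {n k j : ℕ} (hkn : k ≤ n) (hjn : j ≤ n) :
    (binomWeight n k j : ℝ) = n ^ n * (n.choose j * (k / n) ^ j * (1 - k / n) ^ (n - j)) := by
  rcases Nat.eq_zero_or_pos n with rfl | hn
  · obtain rfl : k = 0 := by omega
    obtain rfl : j = 0 := by omega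
    simp [binomWeight]
  have hn' : (n : ℝ) ≠ 0 := by positivity
  have hcompl : 1 - (k : ℝ) / n = (n - k : ℕ) / n := by rw [Nat.cast_sub hkn]; field_simp
  rw [hcompl, div_pow, div_pow, binomWeight, mul_assoc _ (_ / _), div_mul_div_comm, ← pow_add,
    Nat.add_sub_cancel' hjn]
  push_cast
  field_simp

lemma antitoneOn_mul_log_add_sub_log_sub {s : ℝ} (hs : 0 < s) :
    AntitoneOn (fun x => x * (log (x + s) - log (x - s))) (Set.Ioi s) := by
  have hderiv : ∀ x ∈ Set.Ioi s, HasDerivAt (fun x => x * (log (x + s) - log (x - s)))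
      ((log (x + s) - log (x - s)) - x * ((x - s)⁻¹ - (x + s)⁻¹)) x := by
    intro x (hx : s < x)
    have hadd := ((hasDerivAt_id' x).add_const s).log (ne_of_gt (by linarith))
    have hsub := ((hasDerivAt_id' x).sub_const s).log (ne_of_gt (by linarith))
    exact ((hasDerivAt_id' x).fun_mul (hadd.fun_sub hsub)).congr_deriv (by ring)
  refine antitoneOn_of_deriv_nonpos (convex_Ioi s)
    (fun x hx => (hderiv x hx).continuousAt.continuousWithinAt)
    (fun x hx => (hderiv x (interior_subset hx)).differentiableAt.differentiableWithinAt) ?_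
  intro x hx
  rw [interior_Ioi] at hx
  have hx' : s < x := hx
  rw [(hderiv x hx).deriv]
  -- with `r = (x + s) / (x - s)` the derivative is `log r - sinh (log r) ≤ 0`
  set r := (x + s) / (x - s)
  have hr : 1 < r := by rw [one_lt_div (by linarith)]; linarith
  have hlog : log (x + s) - log (x - s) = log r := (log_div (by linarith) (by linarith)).symm
  have hsinh : (r - r⁻¹) / 2 = x * ((x - s)⁻¹ - (x + s)⁻¹) := by
    simp only [r, inv_div]
    field_simp [show x - s ≠ 0 by linarith, show x + s ≠ 0 by linarith]
    ring
  have := self_le_sinh_iff.2 (log_pos hr).le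
  rw [sinh_log (by linarith), hsinh] at this
  linarith

lemma sub_pow_mul_add_pow_le {a b e : ℕ} (hab : a ≤ b) (heb : e ≤ b) {s : ℝ} (hs : 0 ≤ s)
    (hsa : s ≤ a) : (a - s) ^ a * (b + s) ^ e ≤ (a + s) ^ a * (b - s) ^ e := by
  have hab' : (a : ℝ) ≤ b := by exact_mod_cast hab
  rcases hs.eq_or_lt with rfl | hs
  · simp
  rcases hsa.eq_or_lt with rfl | hsa
  · rw [sub_self, zero_pow (Nat.cast_pos.1 hs).ne', zero_mul]
    exact mul_nonneg (by positivity) (pow_nonneg (by linarith) _)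
  have hlogb : 0 ≤ log (b + s) - log (b - s) :=
    sub_nonneg.2 (log_le_log (by linarith) (by linarith))
  have hanti := antitoneOn_mul_log_add_sub_log_sub hs hsa (show s < (b : ℝ) by linarith) hab'
  have heb' : (e : ℝ) ≤ b := by exact_mod_cast heb
  rw [← log_le_log_iff (by positivity) (mul_pos (by positivity) (pow_pos (by linarith) _)),
    log_mul (by positivity) (by positivity), log_mul (by positivity) (pow_ne_zero _ (by linarith)),
    log_pow, log_pow, log_pow, log_pow]
  linarith [mul_le_mul_of_nonneg_right heb' hlogb]

lemma integral_lt_integral_of_reflect_le {φ : ℝ → ℝ} (hφ : Continuous φ) {q : ℝ}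
    (hq : 0 ≤ q) (hq1 : 2 * q < 1)
    (hreflect : ∀ x ∈ Set.Icc q (2 * q), φ (2 * q - x) ≤ φ x)
    (hpos : ∀ x ∈ Set.Ioo (2 * q) 1, 0 < φ x) :
    ∫ x in 0..q, φ x < ∫ x in q..1, φ x := by
  have hint : ∀ a b : ℝ, IntervalIntegrable φ MeasureTheory.volume a b :=
    fun a b => hφ.intervalIntegrable a b
  calc ∫ x in 0..q, φ x = ∫ x in q..2 * q, φ (2 * q - x) := by
        rw [intervalIntegral.integral_comp_sub_left, sub_self, two_mul, add_sub_cancel_right]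
    _ ≤ ∫ x in q..2 * q, φ x :=
        intervalIntegral.integral_mono_on (by linarith)
          ((hφ.comp (continuous_sub_left _)).intervalIntegrable _ _) (hint _ _) hreflect
    _ < (∫ x in q..2 * q, φ x) + ∫ x in 2 * q..1, φ x :=
        lt_add_of_pos_right _ (intervalIntegral.intervalIntegral_pos_of_pos_on (hint _ _) hpos hq1)
    _ = ∫ x in q..1, φ x :=
        intervalIntegral.integral_add_adjacent_intervals (hint _ _) (hint _ _)

lemma pow_mul_pow_reflect_le {m n : ℕ} (hmn : 2 * m < n) {x : ℝ}
    (hx : x ∈ Set.Icc ((m : ℝ) / n) (2 * (m / n))) :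
    (2 * (m / n) - x) ^ m * (1 - (2 * (m / n) - x)) ^ (n - (m + 1)) ≤
      x ^ m * (1 - x) ^ (n - (m + 1)) := by
  have hn : (0 : ℝ) < n := by exact_mod_cast (show 0 < n by omega)
  set s := n * x - m
  have hs : 0 ≤ s := by have := (div_le_iff₀ hn).1 hx.1; linarith
  have hsm : s ≤ m := by
    have := (le_div_iff₀ hn).1 (hx.2.trans_eq (mul_div_assoc' _ _ _)); linarith
  have hcompl : ((n - m : ℕ) : ℝ) = n - m := Nat.cast_sub (by omega)
  have e1 : 2 * (m / n) - x = (m - s) / n := by field_simp; ring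
  have e2 : 1 - (2 * (m / n) - x) = ((n - m : ℕ) + s) / n := by rw [hcompl]; field_simp; ring
  have e3 : x = (m + s) / n := by field_simp; ring
  have e4 : 1 - x = ((n - m : ℕ) - s) / n := by rw [hcompl]; field_simp; ring
  rw [e2, e1, e4, e3, div_pow, div_pow, div_pow, div_pow, div_mul_div_comm, div_mul_div_comm]
  exact div_le_div_of_nonneg_right
    (sub_pow_mul_add_pow_le (b := n - m) (e := n - (m + 1)) (by omega) (by omega) hs hsm)
    (by positivity)

lemma hasDerivAt_choose_mul_pow_mul_pow (n ν : ℕ) (x : ℝ) :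
    HasDerivAt (fun y => (n.choose ν : ℝ) * y ^ ν * (1 - y) ^ (n - ν))
      (ν * n.choose ν * x ^ (ν - 1) * (1 - x) ^ (n - ν) -
        (ν + 1 : ℕ) * n.choose (ν + 1) * x ^ (ν + 1 - 1) * (1 - x) ^ (n - (ν + 1))) x := by
  have hpow := (hasDerivAt_pow ν x).const_mul (n.choose ν : ℝ)
  have hcompl := ((hasDerivAt_id' x).const_sub 1).pow (n - ν)
  refine (hpow.fun_mul hcompl).congr_deriv ?_
  have hchoose : ((ν + 1 : ℕ) * n.choose (ν + 1) : ℝ) = n.choose ν * (n - ν : ℕ) := by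
    exact_mod_cast (mul_comm _ _).trans (Nat.choose_succ_right_eq n ν)
  rw [hchoose, Nat.add_sub_cancel, Nat.sub_add_eq, Pi.pow_apply]
  ring

lemma hasDerivAt_sum_Ico_choose_mul_pow_mul_pow {n t : ℕ} (ht : t ≤ n + 1) (x : ℝ) :
    HasDerivAt
      (fun y => ∑ ν ∈ Ico t (n + 1), (n.choose ν : ℝ) * y ^ ν * (1 - y) ^ (n - ν))
      (t * n.choose t * x ^ (t - 1) * (1 - x) ^ (n - t)) x := by
  set g : ℕ → ℝ := fun ν => ν * n.choose ν * x ^ (ν - 1) * (1 - x) ^ (n - ν)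
  have htelescope : ∑ ν ∈ Ico t (n + 1), (g ν - g (ν + 1)) = g t := by
    calc ∑ ν ∈ Ico t (n + 1), (g ν - g (ν + 1))
        = -∑ ν ∈ Ico t (n + 1), (g (ν + 1) - g ν) := by
          rw [← sum_neg_distrib]; simp only [neg_sub]
      _ = g t := by rw [sum_Ico_sub g ht]; simp [g, Nat.choose_succ_self]
  have hsum := HasDerivAt.fun_sum (u := Ico t (n + 1)) fun ν _ =>
    hasDerivAt_choose_mul_pow_mul_pow n ν x
  rwa [htelescope] at hsum

lemma sum_Ico_choose_mul_pow_mul_pow_lt_half {m n : ℕ} (hmn : 2 * m < n) :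
    ∑ ν ∈ Ico (m + 1) (n + 1), (n.choose ν : ℝ) * (m / n) ^ ν * (1 - m / n) ^ (n - ν) <
      1 / 2 := by
  set q : ℝ := m / n
  set tail := fun y : ℝ =>
    ∑ ν ∈ Ico (m + 1) (n + 1), (n.choose ν : ℝ) * y ^ ν * (1 - y) ^ (n - ν)
  set φ := fun y : ℝ => y ^ m * (1 - y) ^ (n - (m + 1))
  set c : ℝ := (m + 1 : ℕ) * n.choose (m + 1)
  have hq : 0 ≤ q := by positivity
  have hc : 0 < c := by have := Nat.choose_pos (show m + 1 ≤ n by omega); positivity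
  have hderiv : ∀ x, HasDerivAt tail (c * φ x) x := fun x =>
    (hasDerivAt_sum_Ico_choose_mul_pow_mul_pow (by omega) x).congr_deriv
      (by simp only [c, φ, Nat.add_sub_cancel]; ring)
  have hφ : Continuous φ := by fun_prop
  have hftc : ∀ a b, ∫ x in a..b, c * φ x = tail b - tail a := fun a b =>
    intervalIntegral.integral_eq_sub_of_hasDerivAt (fun x _ => hderiv x)
      ((hφ.const_smul c).intervalIntegrable a b)
  have htail0 : tail 0 = 0 := sum_eq_zero fun ν hν => by
    simp [zero_pow (show ν ≠ 0 by simp only [mem_Ico] at hν; omega)]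
  have htail1 : tail 1 = 1 := by
    rw [show tail 1 = ∑ ν ∈ Ico (m + 1) (n + 1), (n.choose ν : ℝ) * 1 ^ ν * 0 ^ (n - ν) by
      simp [tail], sum_eq_single_of_mem n (by simp only [mem_Ico]; omega)]
    · simp
    · intro ν hν hνn
      simp [zero_pow (show n - ν ≠ 0 by simp only [mem_Ico] at hν; omega)]
  have hlt := integral_lt_integral_of_reflect_le hφ hq
    (by rw [mul_div_assoc', div_lt_one (by norm_cast; omega)]; exact_mod_cast hmn)
    (fun x hx => pow_mul_pow_reflect_le hmn hx)
    (fun x ⟨hx0, hx1⟩ => mul_pos (pow_pos (by linarith) _) (pow_pos (by linarith) _))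
  have hscaled := mul_lt_mul_of_pos_left hlt hc
  rw [← intervalIntegral.integral_const_mul, ← intervalIntegral.integral_const_mul, hftc, hftc,
    htail0, htail1] at hscaled
  show tail q < 1 / 2
  linarith

lemma lt_two_mul_sum_range_succ_binomWeight_of_two_mul_lt {m n : ℕ} (hmn : 2 * m < n) :
    n ^ n < 2 * ∑ j ∈ range (m + 1), binomWeight n m j := by
  set p := fun j : ℕ => (n.choose j : ℝ) * ((m : ℝ) / n) ^ j * (1 - m / n) ^ (n - j)
  have htotal : ∑ j ∈ range (n + 1), p j = 1 := by
    calc ∑ j ∈ range (n + 1), p j = ((m : ℝ) / n + (1 - m / n)) ^ n := by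
          rw [add_pow]; exact sum_congr rfl fun j _ => by ring
      _ = 1 := by rw [add_sub_cancel, one_pow]
  have hsplit := sum_range_add_sum_Ico p (show m + 1 ≤ n + 1 by omega)
  have htail : ∑ j ∈ Ico (m + 1) (n + 1), p j < 1 / 2 :=
    sum_Ico_choose_mul_pow_mul_pow_lt_half hmn
  have hcast : ((∑ j ∈ range (m + 1), binomWeight n m j : ℕ) : ℝ) =
      n ^ n * ∑ j ∈ range (m + 1), p j := by
    rw [Nat.cast_sum, mul_sum]
    exact sum_congr rfl fun j hj => cast_binomWeight (by omega) (by simp at hj; omega)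
  have hpos : (0 : ℝ) < n ^ n := pow_pos (by exact_mod_cast (show 0 < n by omega)) n
  suffices (n ^ n : ℝ) < 2 * ((∑ j ∈ range (m + 1), binomWeight n m j : ℕ) : ℝ) by
    exact_mod_cast this
  rw [hcast]
  nlinarith

lemma two_mul_sum_range_binomWeight_lt {n k : ℕ} (hkn : k ≤ n) :
    2 * ∑ j ∈ range k, binomWeight n k j < n ^ n := by
  rcases Nat.eq_zero_or_pos k with rfl | hk
  · simpa using Nat.pow_self_pos
  have htotal := sum_range_add_sum_Ico_binomWeight hkn (show k ≤ n + 1 by omega)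
  by_cases h2k : 2 * k ≤ n
  · have := sum_range_binomWeight_lt_sum_Ico hk h2k
    omega
  · have hreflect :=
      sum_range_binomWeight_add_sum_range_binomWeight_sub hkn (show k ≤ n + 1 by omega)
    have := lt_two_mul_sum_range_succ_binomWeight_of_two_mul_lt (show 2 * (n - k) < n by omega)
    rw [show n + 1 - k = n - k + 1 by omega] at hreflect
    omega

lemma lt_two_mul_sum_range_succ_binomWeight {n k : ℕ} (hkn : k ≤ n) :
    n ^ n < 2 * ∑ j ∈ range (k + 1), binomWeight n k j := by
  rcases hkn.eq_or_lt with rfl | hkn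
  · rw [sum_binomWeight le_rfl]
    linarith [@Nat.pow_self_pos k]
  have hreflect := sum_range_binomWeight_add_sum_range_binomWeight_sub hkn.le
    (show k + 1 ≤ n + 1 by omega)
  have := two_mul_sum_range_binomWeight_lt (show n - k ≤ n by omega)
  rw [show n + 1 - (k + 1) = n - k by omega] at hreflect
  omega

lemma sum_fun_bool_eq_sum_finset {α M : Type*} [Fintype α] [DecidableEq α] [AddCommMonoid M]
    (g : Finset α → M) :
    ∑ f : α → Bool, g (univ.filter fun i => f i = true) = ∑ s : Finset α, g s :=
  Fintype.sum_equiv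
    { toFun := fun f => univ.filter fun i => f i = true
      invFun := fun s i => decide (i ∈ s)
      left_inv := fun f => by ext i; simp
      right_inv := fun s => by ext i; simp }
    _ _ fun _ => rfl

lemma sum_bw_mul {n : ℕ} (ρ : ℝ) (h : ℕ → ℝ) :
    ∑ f : Fin n → Bool, bw ρ f * h (univ.filter fun i => f i = true).card =
      ∑ j ∈ range (n + 1), n.choose j * ρ ^ j * (1 - ρ) ^ (n - j) * h j := by
  have hbw : ∀ f : Fin n → Bool, bw ρ f = ρ ^ (univ.filter fun i => f i = true).card *
      (1 - ρ) ^ (n - (univ.filter fun i => f i = true).card) := fun f => by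
    rw [bw, prod_ite, prod_const, prod_const, filter_not, card_sdiff_of_subset (filter_subset _ _),
      card_univ, Fintype.card_fin]
  set g : ℕ → ℝ := fun j => ρ ^ j * (1 - ρ) ^ (n - j) * h j
  calc ∑ f : Fin n → Bool, bw ρ f * h (univ.filter fun i => f i = true).card
      = ∑ f : Fin n → Bool, g (univ.filter fun i => f i = true).card :=
        sum_congr rfl fun f _ => by rw [hbw]
    _ = ∑ s : Finset (Fin n), g s.card := sum_fun_bool_eq_sum_finset (fun s => g s.card)
    _ = ∑ j ∈ range (n + 1), n.choose j • g j := by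
        rw [← powerset_univ, sum_powerset_apply_card, card_univ, Fintype.card_fin]
    _ = _ := sum_congr rfl fun j _ => by rw [nsmul_eq_mul]; ring

lemma half_le_sum_bw_mul_indicator_iff {n k : ℕ} (hkn : k ≤ n) (P : ℕ → Prop)
    [DecidablePred P] :
    (1 : ℝ) / 2 ≤ ∑ f : Fin n → Bool, bw ((k : ℝ) / n) f *
        (if P (univ.filter fun i => f i = true).card then 1 else 0) ↔
      n ^ n ≤ 2 * ∑ j ∈ (range (n + 1)).filter P, binomWeight n k j := by
  have hpos : (0 : ℝ) < n ^ n := by exact_mod_cast Nat.pow_self_pos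
  have hsum : ∑ f : Fin n → Bool, bw ((k : ℝ) / n) f *
        (if P (univ.filter fun i => f i = true).card then 1 else 0) =
      ((∑ j ∈ (range (n + 1)).filter P, binomWeight n k j : ℕ) : ℝ) / n ^ n := by
    rw [sum_bw_mul _ (fun j => if P j then 1 else 0), Nat.cast_sum, sum_filter, sum_div]
    refine sum_congr rfl fun j hj => ?_
    split_ifs
    · rw [cast_binomWeight hkn (by simp at hj; omega)]; field_simp
    · simp
  rw [hsum, le_div_iff₀ hpos, ← Nat.cast_le (α := ℝ)]
  push_cast
  constructor <;> intro h <;> linarith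

theorem binomial_median_general (n k : ℕ) (hkn : k ≤ n) :
    (∀ m : ℕ,
      ((1:ℝ)/2 ≤ ∑ f : Fin n → Bool, bw ((k:ℝ)/n) f *
          (if (Finset.univ.filter fun i => f i = true).card ≤ m then 1 else 0)) →
      ((1:ℝ)/2 ≤ ∑ f : Fin n → Bool, bw ((k:ℝ)/n) f *
          (if m ≤ (Finset.univ.filter fun i => f i = true).card then 1 else 0)) →
      k - 1 ≤ m ∧ m ≤ k) ∧
    (1:ℝ)/2 ≤ ∑ f : Fin n → Bool, bw ((k:ℝ)/n) f *
        (if k ≤ (Finset.univ.filter fun i => f i = true).card then 1 else 0) := by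
  have hlower := two_mul_sum_range_binomWeight_lt hkn
  have hupper := lt_two_mul_sum_range_succ_binomWeight hkn
  refine ⟨fun m hle hge => ⟨?_, ?_⟩, ?_⟩
  · have hmass := (half_le_sum_bw_mul_indicator_iff hkn (· ≤ m)).1 hle
    by_contra! hm
    have : ∑ j ∈ (range (n + 1)).filter (· ≤ m), binomWeight n k j ≤
        ∑ j ∈ range k, binomWeight n k j :=
      sum_le_sum_of_subset fun j hj => by simp only [mem_filter, mem_range] at hj ⊢; omega
    omega
  · have hmass := (half_le_sum_bw_mul_indicator_iff hkn (m ≤ ·)).1 hge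
    by_contra! hm
    have : ∑ j ∈ (range (n + 1)).filter (m ≤ ·), binomWeight n k j ≤
        ∑ j ∈ Ico (k + 1) (n + 1), binomWeight n k j :=
      sum_le_sum_of_subset fun j hj => by
        simp only [mem_filter, mem_range, mem_Ico] at hj ⊢; omega
    have := sum_range_add_sum_Ico_binomWeight hkn (show k + 1 ≤ n + 1 by omega)
    omega
  · refine (half_le_sum_bw_mul_indicator_iff hkn (k ≤ ·)).2 ?_
    have hfilter : (range (n + 1)).filter (k ≤ ·) = Ico k (n + 1) := by ext j; simp; omega
    have := sum_range_add_sum_Ico_binomWeight hkn (show k ≤ n + 1 by omega)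
    rw [hfilter]
    omega

/-- Medians of Binomial(n, k/n) lie between k-1 and k; in particular P[X ≥ k] ≥ 1/2. -/
theorem binomial_median (n k : ℕ) (hk : 1 ≤ k) (hkn : k ≤ n) :
    (∀ m : ℕ,
      ((1:ℝ)/2 ≤ ∑ f : Fin n → Bool, bw ((k:ℝ)/n) f *
          (if (Finset.univ.filter fun i => f i = true).card ≤ m then 1 else 0)) →
      ((1:ℝ)/2 ≤ ∑ f : Fin n → Bool, bw ((k:ℝ)/n) f *
          (if m ≤ (Finset.univ.filter fun i => f i = true).card then 1 else 0)) →
      k - 1 ≤ m ∧ m ≤ k) ∧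
    (1:ℝ)/2 ≤ ∑ f : Fin n → Bool, bw ((k:ℝ)/n) f *
        (if k ≤ (Finset.univ.filter fun i => f i = true).card then 1 else 0) :=
  binomial_median_general n k hkn
end

section
/- Let X be an n×n matrix and let R_ρ be a random diagonal matrix with i.i.d. Bernoulli(ρ) diagonal entries, ρ ∈ (0,1). Suppose p ≥ 2 log n and p ≥ 4. Then (E ‖R_ρ X‖_{1→2}^p)^{1/p} ≤ 2^{3/2} √p · ‖X‖_max + √ρ · ‖X‖_{1→2}, where ‖X‖_max is the largest absolute value of an entry of X and ‖X‖_{1→2} is the maximum Euclidean column norm. -/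
open scoped BigOperators

/-- Maximum absolute entry of a matrix. -/
noncomputable def maxEntry {m n : ℕ} (A : Matrix (Fin m) (Fin n) ℂ) : ℝ :=
  ⨆ i, ⨆ j, ‖A i j‖


/-!
Write `δᵢ` for the selectors and `aᵢⱼ = |Xᵢⱼ|²`. The squared norm of column `j` of `R_ρ X` is
`ρ ∑ᵢ aᵢⱼ + Zⱼ` with `Zⱼ = ∑ᵢ (δᵢ - ρ) aᵢⱼ`, so `‖R_ρ X‖²_{1→2} ≤ ρ ‖X‖²_{1→2} + maxⱼ |Zⱼ|`, and by
Minkowski's inequality in `L^{p/2}` it suffices to bound the `L^{p/2}` norm of `maxⱼ |Zⱼ|`.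
Instead of symmetrization and Khintchine we use moment generating functions: since
`aᵢⱼ ≤ ‖X‖²_max`, for `|s| ≤ μ⁻¹` with `μ ≥ ‖X‖²_max` one has
`E exp (s Zⱼ) ≤ exp (ρ s² ∑ᵢ aᵢⱼ²) ≤ exp (s² ρ ‖X‖²_max ‖X‖²_{1→2})`, and
`|z|^q ≤ (q / (e λ))^q (e^{λz} + e^{-λz})` turns this into `E |Zⱼ|^q ≤ 2 (q μ)^q` for `q = p/2` and
`μ = ‖X‖²_max + √ρ ‖X‖_max ‖X‖_{1→2} / √q`. Summing over the `n ≤ e^q` columns bounds the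
`L^q` norm of `maxⱼ |Zⱼ|` by `2 e q μ`, and the rest is arithmetic with `e < 4`.
-/

open Finset Real

theorem rpow_le_div_exp_one_rpow_mul_exp {q y : ℝ} (hq : 0 < q) (hy : 0 ≤ y) :
    y ^ q ≤ (q / exp 1) ^ q * exp y := by
  rcases hy.eq_or_lt with rfl | hy
  · rw [zero_rpow hq.ne']
    positivity
  · rw [rpow_def_of_pos hy, rpow_def_of_pos (by positivity), ← exp_add, exp_le_exp,
      log_div hq.ne' (exp_ne_zero 1), log_exp]
    have hlog := log_le_sub_one_of_pos (div_pos hy hq)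
    rw [log_div hy.ne' hq.ne'] at hlog
    have := mul_le_mul_of_nonneg_right hlog hq.le
    rw [sub_mul, sub_mul, div_mul_cancel₀ _ hq.ne'] at this
    linarith

theorem abs_rpow_le_mul_exp_add_exp {q l : ℝ} (hq : 0 < q) (hl : 0 < l) (z : ℝ) :
    |z| ^ q ≤ (q / (exp 1 * l)) ^ q * (exp (l * z) + exp (-(l * z))) := by
  have hexp : exp (l * |z|) ≤ exp (l * z) + exp (-(l * z)) := by
    rcases abs_choice z with h | h <;> simp only [h, mul_neg] <;>
      linarith [exp_pos (l * z), exp_pos (-(l * z))]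
  calc |z| ^ q = (l * |z|) ^ q / l ^ q := by
        rw [mul_rpow hl.le (abs_nonneg z), mul_div_cancel_left₀ _ (rpow_pos_of_pos hl q).ne']
    _ ≤ (q / exp 1) ^ q * exp (l * |z|) / l ^ q := by
        gcongr
        exact rpow_le_div_exp_one_rpow_mul_exp hq (by positivity)
    _ = (q / (exp 1 * l)) ^ q * exp (l * |z|) := by
        rw [← div_div, div_rpow (by positivity) hl.le]
        ring
    _ ≤ (q / (exp 1 * l)) ^ q * (exp (l * z) + exp (-(l * z))) := by gcongr

theorem bernoulli_mgf_le {ρ t : ℝ} (hρ : 0 ≤ ρ) (ht : |t| ≤ 1) :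
    ρ * exp ((1 - ρ) * t) + (1 - ρ) * exp (-(ρ * t)) ≤ exp (ρ * t ^ 2) := by
  have hlin : 1 - ρ + ρ * exp t ≤ exp (ρ * (exp t - 1)) := by
    linarith [add_one_le_exp (ρ * (exp t - 1))]
  have hquad : exp t - 1 - t ≤ t ^ 2 := (abs_le.1 (abs_exp_sub_one_sub_id_le ht)).2
  calc ρ * exp ((1 - ρ) * t) + (1 - ρ) * exp (-(ρ * t))
      = exp (-(ρ * t)) * (1 - ρ + ρ * exp t) := by
        rw [show (1 - ρ) * t = t + -(ρ * t) by ring, exp_add]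
        ring
    _ ≤ exp (-(ρ * t)) * exp (ρ * (exp t - 1)) := by gcongr
    _ = exp (ρ * (exp t - 1 - t)) := by
        rw [← exp_add]
        ring_nf
    _ ≤ exp (ρ * t ^ 2) := by gcongr

section WeightedSum

variable {Ω : Type*} [Fintype Ω] {w : Ω → ℝ}

theorem sum_mul_abs_rpow_le_of_sum_mul_exp_le {Z : Ω → ℝ} {q l C : ℝ} (hw : ∀ ω, 0 ≤ w ω)
    (hq : 0 < q) (hl : 0 < l) (hpos : ∑ ω, w ω * exp (l * Z ω) ≤ C)
    (hneg : ∑ ω, w ω * exp (-(l * Z ω)) ≤ C) :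
    ∑ ω, w ω * |Z ω| ^ q ≤ (q / (exp 1 * l)) ^ q * (2 * C) :=
  calc ∑ ω, w ω * |Z ω| ^ q
      ≤ ∑ ω, w ω * ((q / (exp 1 * l)) ^ q * (exp (l * Z ω) + exp (-(l * Z ω)))) := by
        gcongr with ω
        · exact hw ω
        · exact abs_rpow_le_mul_exp_add_exp hq hl (Z ω)
    _ = (q / (exp 1 * l)) ^ q *
          (∑ ω, w ω * exp (l * Z ω) + ∑ ω, w ω * exp (-(l * Z ω))) := by
        rw [← sum_add_distrib, mul_sum]
        exact sum_congr rfl fun _ _ => by ring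
    _ ≤ (q / (exp 1 * l)) ^ q * (2 * C) := by
        rw [two_mul]
        gcongr

theorem sum_mul_iSup_rpow_le {ι : Type*} [Fintype ι] {g : ι → Ω → ℝ} {q : ℝ} (hw : ∀ ω, 0 ≤ w ω)
    (hq : 0 < q) (hg : ∀ j ω, 0 ≤ g j ω) :
    ∑ ω, w ω * (⨆ j, g j ω) ^ q ≤ ∑ j, ∑ ω, w ω * g j ω ^ q := by
  have hmax : ∀ ω, (⨆ j, g j ω) ^ q ≤ ∑ j, g j ω ^ q := by
    intro ω
    rcases isEmpty_or_nonempty ι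
    · simp [zero_rpow hq.ne']
    · obtain ⟨j, hj⟩ := exists_eq_ciSup_of_finite (f := fun j => g j ω)
      rw [← hj]
      exact single_le_sum (fun j _ => rpow_nonneg (hg j ω) q) (mem_univ j)
  calc ∑ ω, w ω * (⨆ j, g j ω) ^ q ≤ ∑ ω, w ω * ∑ j, g j ω ^ q := by
        gcongr with ω
        exacts [hw ω, hmax ω]
    _ = ∑ j, ∑ ω, w ω * g j ω ^ q := by
        simp_rw [mul_sum]
        exact sum_comm

theorem sum_mul_add_rpow_le {W : Ω → ℝ} {c K q : ℝ} (hw : ∀ ω, 0 ≤ w ω) (hw1 : ∑ ω, w ω = 1)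
    (hq : 1 ≤ q) (hc : 0 ≤ c) (hW : ∀ ω, 0 ≤ W ω) (hK : 0 ≤ K)
    (hWK : ∑ ω, w ω * W ω ^ q ≤ K ^ q) :
    ∑ ω, w ω * (c + W ω) ^ q ≤ (c + K) ^ q := by
  have hq0 : 0 < q := by linarith
  have hweight : ∀ ω x, 0 ≤ x → (w ω ^ q⁻¹ * x) ^ q = w ω * x ^ q := fun ω x hx => by
    rw [mul_rpow (rpow_nonneg (hw ω) _) hx, rpow_inv_rpow (hw ω) hq0.ne']
  have hmink := Lp_add_le_of_nonneg (s := univ) (f := fun ω => w ω ^ q⁻¹ * c)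
    (g := fun ω => w ω ^ q⁻¹ * W ω) hq (fun ω _ => mul_nonneg (rpow_nonneg (hw ω) _) hc)
    (fun ω _ => mul_nonneg (rpow_nonneg (hw ω) _) (hW ω))
  simp only [← mul_add, fun ω => hweight ω _ hc, fun ω => hweight ω _ (hW ω),
    fun ω => hweight ω _ (add_nonneg hc (hW ω)), ← sum_mul, hw1, one_mul, one_div,
    rpow_rpow_inv hc hq0.ne'] at hmink
  rw [← rpow_inv_le_iff_of_pos
    (sum_nonneg fun ω _ => mul_nonneg (hw ω) (rpow_nonneg (add_nonneg hc (hW ω)) q))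
    (add_nonneg hc hK) hq0]
  refine hmink.trans (add_le_add_right ?_ c)
  rwa [rpow_inv_le_iff_of_pos (sum_nonneg fun ω _ => mul_nonneg (hw ω) (rpow_nonneg (hW ω) q))
    hK hq0]

end WeightedSum

section Bernoulli

variable {n : ℕ} {ρ : ℝ}

theorem bw_nonneg (hρ0 : 0 ≤ ρ) (hρ1 : ρ ≤ 1) (f : Fin n → Bool) : 0 ≤ bw ρ f :=
  prod_nonneg fun i _ => by split_ifs <;> linarith

theorem sum_bw_mul_prod (g : Fin n → Bool → ℝ) :
    ∑ f : Fin n → Bool, bw ρ f * ∏ i, g i (f i) = ∏ i, (ρ * g i true + (1 - ρ) * g i false) := by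
  have hfactor : ∀ i, ρ * g i true + (1 - ρ) * g i false
      = ∑ b, (if b then ρ else 1 - ρ) * g i b := fun i => by simp
  simp only [hfactor, Fintype.prod_sum, prod_mul_distrib, bw]

theorem sum_bw : ∑ f : Fin n → Bool, bw ρ f = 1 := by
  simpa using sum_bw_mul_prod (ρ := ρ) fun (_ : Fin n) _ => (1 : ℝ)

def centeredSum (ρ : ℝ) (a : Fin n → ℝ) (f : Fin n → Bool) : ℝ :=
  ∑ i, ((if f i then 1 else 0) - ρ) * a i

theorem sum_bw_mul_exp_centeredSum_le (hρ0 : 0 ≤ ρ) (hρ1 : ρ ≤ 1) {s : ℝ} {a : Fin n → ℝ}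
    (hsa : ∀ i, |s * a i| ≤ 1) :
    ∑ f : Fin n → Bool, bw ρ f * exp (s * centeredSum ρ a f) ≤ exp (ρ * s ^ 2 * ∑ i, a i ^ 2) := by
  have hprod : ∀ f : Fin n → Bool, exp (s * centeredSum ρ a f)
      = ∏ i, exp (((if f i then 1 else 0) - ρ) * (s * a i)) := fun f => by
    rw [centeredSum, mul_sum, ← exp_sum]
    exact congrArg exp (sum_congr rfl fun _ _ => by ring)
  simp only [hprod, sum_bw_mul_prod fun i b => exp (((if b then 1 else 0) - ρ) * (s * a i)),
    if_true, Bool.false_eq_true, if_false, zero_sub, neg_mul]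
  calc ∏ i, (ρ * exp ((1 - ρ) * (s * a i)) + (1 - ρ) * exp (-(ρ * (s * a i))))
      ≤ ∏ i, exp (ρ * (s * a i) ^ 2) :=
        prod_le_prod (fun i _ => by have := sub_nonneg.2 hρ1; positivity)
          fun i _ => bernoulli_mgf_le hρ0 (hsa i)
    _ = exp (ρ * s ^ 2 * ∑ i, a i ^ 2) := by
        rw [← exp_sum, mul_sum]
        exact congrArg exp (sum_congr rfl fun _ _ => by ring)

theorem sum_bw_mul_abs_centeredSum_rpow_le (hρ0 : 0 ≤ ρ) (hρ1 : ρ ≤ 1) {q μ : ℝ} (hq : 0 < q)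
    (hμ : 0 ≤ μ) {a : Fin n → ℝ} (ha0 : ∀ i, 0 ≤ a i) (haμ : ∀ i, a i ≤ μ)
    (hvar : ρ * ∑ i, a i ^ 2 ≤ q * μ ^ 2) :
    ∑ f : Fin n → Bool, bw ρ f * |centeredSum ρ a f| ^ q ≤ 2 * (q * μ) ^ q := by
  rcases hμ.eq_or_lt with rfl | hμ
  · have ha : ∀ i, a i = 0 := fun i => le_antisymm (haμ i) (ha0 i)
    simp [centeredSum, ha, zero_rpow hq.ne']
  have hmgf : ∀ s, |s| = μ⁻¹ →
      ∑ f : Fin n → Bool, bw ρ f * exp (s * centeredSum ρ a f) ≤ exp q := fun s hs => by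
    refine (sum_bw_mul_exp_centeredSum_le hρ0 hρ1 fun i => ?_).trans (exp_le_exp.2 ?_)
    · rw [abs_mul, hs, abs_of_nonneg (ha0 i), inv_mul_le_one₀ hμ]
      exact haμ i
    · rw [← sq_abs, hs, mul_comm ρ, mul_assoc, inv_pow, inv_mul_le_iff₀ (by positivity)]
      linarith
  refine (sum_mul_abs_rpow_le_of_sum_mul_exp_le (bw_nonneg hρ0 hρ1) hq (inv_pos.2 hμ)
    (hmgf _ (abs_of_pos (inv_pos.2 hμ))) (by simpa using hmgf (-μ⁻¹) (by simp [hμ.le]))).trans_eq ?_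
  rw [show q / (exp 1 * μ⁻¹) = q * μ / exp 1 by field_simp,
    div_rpow (by positivity) (exp_pos 1).le, exp_one_rpow]
  field_simp

end Bernoulli

section Matrix

variable {m n : ℕ}

theorem colNorm_nonneg (A : Matrix (Fin m) (Fin n) ℂ) : 0 ≤ colNorm A :=
  Real.iSup_nonneg fun _ => sqrt_nonneg _

theorem maxEntry_nonneg (A : Matrix (Fin m) (Fin n) ℂ) : 0 ≤ maxEntry A :=
  Real.iSup_nonneg fun _ => Real.iSup_nonneg fun _ => norm_nonneg _

theorem norm_le_maxEntry (A : Matrix (Fin m) (Fin n) ℂ) (i : Fin m) (j : Fin n) :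
    ‖A i j‖ ≤ maxEntry A :=
  (le_ciSup (Set.finite_range _).bddAbove j).trans
    (le_ciSup (f := fun i => ⨆ j, ‖A i j‖) (Set.finite_range _).bddAbove i)

theorem sum_norm_sq_le_colNorm_sq (A : Matrix (Fin m) (Fin n) ℂ) (j : Fin n) :
    ∑ i, ‖A i j‖ ^ 2 ≤ colNorm A ^ 2 :=
  (sqrt_le_left (colNorm_nonneg A)).1 <|
    le_ciSup (f := fun j => √(∑ i, ‖A i j‖ ^ 2)) (Set.finite_range _).bddAbove j

theorem sum_norm_sq_sq_le (A : Matrix (Fin m) (Fin n) ℂ) (j : Fin n) :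
    ∑ i, (‖A i j‖ ^ 2) ^ 2 ≤ maxEntry A ^ 2 * colNorm A ^ 2 :=
  calc ∑ i, (‖A i j‖ ^ 2) ^ 2 ≤ ∑ i, maxEntry A ^ 2 * ‖A i j‖ ^ 2 := by
        gcongr with i
        rw [sq (‖A i j‖ ^ 2)]
        gcongr
        exact norm_le_maxEntry A i j
    _ ≤ maxEntry A ^ 2 * colNorm A ^ 2 := by
        rw [← mul_sum]
        gcongr
        exact sum_norm_sq_le_colNorm_sq A j

theorem norm_bernM_mul_apply_sq (f : Fin m → Bool) (X : Matrix (Fin m) (Fin n) ℂ) (i : Fin m)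
    (j : Fin n) : ‖(bernM f * X) i j‖ ^ 2 = (if f i then 1 else 0) * ‖X i j‖ ^ 2 := by
  rw [bernM, Matrix.diagonal_mul]
  split_ifs <;> simp

theorem colNorm_bernM_mul_sq_le {ρ : ℝ} (hρ : 0 ≤ ρ) (f : Fin m → Bool)
    (X : Matrix (Fin m) (Fin n) ℂ) :
    colNorm (bernM f * X) ^ 2
      ≤ ρ * colNorm X ^ 2 + ⨆ j, |centeredSum ρ (fun i => ‖X i j‖ ^ 2) f| := by
  have hcol : ∀ j, ∑ i, ‖(bernM f * X) i j‖ ^ 2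
      ≤ ρ * colNorm X ^ 2 + ⨆ j, |centeredSum ρ (fun i => ‖X i j‖ ^ 2) f| := fun j =>
    calc ∑ i, ‖(bernM f * X) i j‖ ^ 2
        = ρ * ∑ i, ‖X i j‖ ^ 2 + centeredSum ρ (fun i => ‖X i j‖ ^ 2) f := by
          simp only [norm_bernM_mul_apply_sq, centeredSum, mul_sum, ← sum_add_distrib]
          exact sum_congr rfl fun _ _ => by ring
      _ ≤ ρ * colNorm X ^ 2 + ⨆ j, |centeredSum ρ (fun i => ‖X i j‖ ^ 2) f| := by
          gcongr
          · exact sum_norm_sq_le_colNorm_sq X j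
          · exact (le_abs_self _).trans
              (le_ciSup (f := fun j => |centeredSum ρ (fun i => ‖X i j‖ ^ 2) f|)
                (Set.finite_range _).bddAbove j)
  have hrhs : 0 ≤ ρ * colNorm X ^ 2 + ⨆ j, |centeredSum ρ (fun i => ‖X i j‖ ^ 2) f| :=
    add_nonneg (by positivity) (Real.iSup_nonneg fun _ => abs_nonneg _)
  exact (le_sqrt (colNorm_nonneg _) hrhs).1 <|
    Real.iSup_le (fun j => sqrt_le_sqrt (hcol j)) (sqrt_nonneg _)

theorem sum_bw_mul_iSup_abs_centeredSum_rpow_le {ρ q : ℝ} (hρ0 : 0 ≤ ρ) (hρ1 : ρ ≤ 1)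
    (hq : 1 ≤ q) (X : Matrix (Fin m) (Fin n) ℂ) (hn : log n ≤ q) :
    ∑ f : Fin m → Bool, bw ρ f * (⨆ j, |centeredSum ρ (fun i => ‖X i j‖ ^ 2) f|) ^ q
      ≤ (2 * exp 1 * (q * maxEntry X ^ 2 + √q * √ρ * maxEntry X * colNorm X)) ^ q := by
  have hq0 : 0 < q := by linarith
  have hM := maxEntry_nonneg X
  have hB := colNorm_nonneg X
  set μ := maxEntry X ^ 2 + √ρ * maxEntry X * colNorm X / √q with hμ
  have hμ_ge : √ρ * maxEntry X * colNorm X ≤ √q * μ := by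
    rw [hμ, mul_add, mul_div_cancel₀ _ (sqrt_pos.2 hq0).ne']
    exact le_add_of_nonneg_left (by positivity)
  have hcol : ∀ j, ∑ f : Fin m → Bool, bw ρ f * |centeredSum ρ (fun i => ‖X i j‖ ^ 2) f| ^ q
      ≤ 2 * (q * μ) ^ q := fun j =>
    sum_bw_mul_abs_centeredSum_rpow_le hρ0 hρ1 hq0 (by positivity) (fun i => sq_nonneg _)
      (fun i => (pow_le_pow_left₀ (norm_nonneg _) (norm_le_maxEntry X i j) 2).trans
        (le_add_of_nonneg_right (by positivity)))
      (calc ρ * ∑ i, (‖X i j‖ ^ 2) ^ 2 ≤ ρ * (maxEntry X ^ 2 * colNorm X ^ 2) := by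
              gcongr
              exact sum_norm_sq_sq_le X j
          _ = (√ρ * maxEntry X * colNorm X) ^ 2 := by rw [mul_pow, mul_pow, sq_sqrt hρ0]; ring
          _ ≤ (√q * μ) ^ 2 := by gcongr
          _ = q * μ ^ 2 := by rw [mul_pow, sq_sqrt hq0.le])
  have hcard : (n : ℝ) ≤ exp q := (le_exp_log _).trans (exp_le_exp.2 hn)
  have htwo : (2 : ℝ) ≤ 2 ^ q := by
    simpa using rpow_le_rpow_of_exponent_le one_le_two hq
  calc ∑ f : Fin m → Bool, bw ρ f * (⨆ j, |centeredSum ρ (fun i => ‖X i j‖ ^ 2) f|) ^ q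
      ≤ ∑ j, ∑ f : Fin m → Bool, bw ρ f * |centeredSum ρ (fun i => ‖X i j‖ ^ 2) f| ^ q :=
        sum_mul_iSup_rpow_le (bw_nonneg hρ0 hρ1) hq0 fun _ _ => abs_nonneg _
    _ ≤ n * (2 * (q * μ) ^ q) := (sum_le_sum fun j _ => hcol j).trans_eq (by simp)
    _ ≤ exp q * (2 ^ q * (q * μ) ^ q) := by gcongr
    _ = (2 * exp 1 * (q * μ)) ^ q := by
        rw [mul_rpow (x := 2 * exp 1) (by positivity) (by positivity),
          mul_rpow zero_le_two (exp_pos 1).le, exp_one_rpow]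
        ring
    _ = (2 * exp 1 * (q * maxEntry X ^ 2 + √q * √ρ * maxEntry X * colNorm X)) ^ q := by
        rw [hμ, mul_add, mul_div_left_comm, div_sqrt]
        ring_nf

theorem sum_bw_mul_colNorm_bernM_mul_rpow_le {ρ q : ℝ} (hρ0 : 0 ≤ ρ) (hρ1 : ρ ≤ 1) (hq : 1 ≤ q)
    (X : Matrix (Fin m) (Fin n) ℂ) (hn : log n ≤ q) :
    ∑ f : Fin m → Bool, bw ρ f * colNorm (bernM f * X) ^ (2 * q)
      ≤ (4 * √q * maxEntry X + √ρ * colNorm X) ^ (2 * q) := by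
  have hM := maxEntry_nonneg X
  have hB := colNorm_nonneg X
  have hpow : ∀ x : ℝ, 0 ≤ x → x ^ (2 * q) = (x ^ 2) ^ q := fun x hx => by
    rw [rpow_mul hx, rpow_two]
  set W : (Fin m → Bool) → ℝ := fun f => ⨆ j, |centeredSum ρ (fun i => ‖X i j‖ ^ 2) f|
  set K := 2 * exp 1 * (q * maxEntry X ^ 2 + √q * √ρ * maxEntry X * colNorm X)
  have hK : ρ * colNorm X ^ 2 + K ≤ (4 * √q * maxEntry X + √ρ * colNorm X) ^ 2 := by
    have he : exp 1 < 4 := by linarith [exp_one_lt_d9]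
    have h1 : 0 ≤ q * maxEntry X ^ 2 := by positivity
    have h2 : 0 ≤ √q * √ρ * maxEntry X * colNorm X := by positivity
    nlinarith [sq_sqrt (zero_le_one.trans hq), sq_sqrt hρ0,
      mul_le_mul_of_nonneg_right he.le h1, mul_le_mul_of_nonneg_right he.le h2]
  calc ∑ f : Fin m → Bool, bw ρ f * colNorm (bernM f * X) ^ (2 * q)
      ≤ ∑ f : Fin m → Bool, bw ρ f * (ρ * colNorm X ^ 2 + W f) ^ q := by
        gcongr with f
        · exact bw_nonneg hρ0 hρ1 f
        · rw [hpow _ (colNorm_nonneg _)]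
          gcongr
          exact colNorm_bernM_mul_sq_le hρ0 f X
    _ ≤ (ρ * colNorm X ^ 2 + K) ^ q :=
        sum_mul_add_rpow_le (bw_nonneg hρ0 hρ1) sum_bw hq (by positivity)
          (fun f => Real.iSup_nonneg fun _ => abs_nonneg _) (by positivity)
          (sum_bw_mul_iSup_abs_centeredSum_rpow_le hρ0 hρ1 hq X hn)
    _ ≤ ((4 * √q * maxEntry X + √ρ * colNorm X) ^ 2) ^ q := by gcongr
    _ = (4 * √q * maxEntry X + √ρ * colNorm X) ^ (2 * q) := (hpow _ (by positivity)).symm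

end Matrix

/-- Maximum column norm of a random row restriction. -/
theorem max_column_norm_estimate (n : ℕ) (X : Matrix (Fin n) (Fin n) ℂ) (ρ : ℝ)
    (hρ : ρ ∈ Set.Ioo (0:ℝ) 1) (p : ℝ) (hp1 : 2 * Real.log n ≤ p) (hp2 : 4 ≤ p) :
    (∑ f : Fin n → Bool, bw ρ f * colNorm (bernM f * X) ^ p) ^ (1/p)
      ≤ (2:ℝ) ^ ((3:ℝ)/2) * Real.sqrt p * maxEntry X
        + Real.sqrt ρ * colNorm X := by
  obtain ⟨hρ0, hρ1⟩ := hρ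
  obtain ⟨q, rfl⟩ : ∃ q, p = 2 * q := ⟨p / 2, by ring⟩
  have hcoef : (2 : ℝ) ^ ((3 : ℝ) / 2) * √(2 * q) = 4 * √q := by
    rw [show (3 : ℝ) / 2 = 1 + 1 / 2 by norm_num, rpow_add two_pos, rpow_one, ← sqrt_eq_rpow,
      sqrt_mul zero_le_two]
    linear_combination 2 * √q * sq_sqrt (zero_le_two (α := ℝ))
  have hM := maxEntry_nonneg X
  have hB := colNorm_nonneg X
  rw [hcoef, one_div, rpow_inv_le_iff_of_pos
    (sum_nonneg fun f _ =>
      mul_nonneg (bw_nonneg hρ0.le hρ1.le f) (rpow_nonneg (colNorm_nonneg _) _))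
    (by positivity) (by linarith)]
  exact sum_bw_mul_colNorm_bernM_mul_rpow_le hρ0.le hρ1.le (by linarith) X (by linarith)
end

section
/- Let r(t) = Σ_{k=0}^d c_k t^k be a polynomial of degree at most d with real coefficients. Then for each k = 0, 1, ..., d, the coefficient satisfies |c_k| ≤ (d^k / k!) · max_{|t| ≤ 1} |r(t)| ≤ e^d · max_{|t| ≤ 1} |r(t)|. -/
open scoped BigOperators

/-!
Markov's argument. Replacing `r` by its part of the parity of `k`, and `d` by the largest
`d' ≤ d` with `d' ≡ k (mod 2)`, we may assume that `r` has the parity of `d ≡ k`. If then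
`|r_k| > |(T_d)_k| M`, the polynomial `q = T_d - ((T_d)_k / r_k) r` has `q_k = 0` but, like `T_d`,
alternates in sign at the `d + 1` extrema `cos (jπ/d)`. Writing `q = X^(d % 2) g(X²)`, the
polynomial `g` has degree at most `d/2` and alternates at the `d/2 + 1` decreasing points
`cos² (jπ/d) ≥ 0`, so its roots are `d/2` positive reals, and by Vieta none of its coefficients
vanishes. The estimate `|(T_n)_k| k! ≤ n^k` follows by induction from `T_{n+2} = 2X T_{n+1} - T_n`.
-/

open Polynomial Real

theorem Multiset.esymm_pos {R : Type*} [CommSemiring R] [PartialOrder R] [IsStrictOrderedRing R]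
    {s : Multiset R} (hs : ∀ a ∈ s, 0 < a) {n : ℕ} (hn : n ≤ card s) : 0 < s.esymm n := by
  have hprod : ∀ t ∈ powersetCard n s, 0 < t.prod := fun t ht =>
    prod_pos fun a ha => hs a (mem_of_le (mem_powersetCard.1 ht).1 ha)
  have hne : powersetCard n s ≠ 0 := by
    rw [← card_pos, card_powersetCard]
    exact Nat.choose_pos hn
  obtain ⟨t, ht⟩ := exists_mem_of_ne_zero hne
  calc 0 < t.prod := hprod t ht
    _ ≤ s.esymm n := single_le_sum (fun x hx => by
          obtain ⟨u, hu, rfl⟩ := mem_map.1 hx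
          exact (hprod u hu).le) _ (mem_map_of_mem _ ht)

namespace Polynomial

theorem coeff_comp_neg_X {R : Type*} [CommRing R] (p : R[X]) (n : ℕ) :
    (p.comp (-X)).coeff n = (-1) ^ n * p.coeff n := by
  rw [← neg_one_mul (X : R[X]), ← C_1, ← C_neg, comp_C_mul_X_coeff, mul_comm]

theorem coeff_eq_zero_of_eval_neg {R : Type*} [CommRing R] [IsDomain R] [CharZero R] {p : R[X]}
    {d : ℕ} (hp : ∀ t, p.eval (-t) = (-1) ^ d * p.eval t) {m : ℕ} (hm : m % 2 ≠ d % 2) :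
    p.coeff m = 0 := by
  have hcomp : p.comp (-X) = C ((-1) ^ d) * p := Polynomial.funext fun t => by simp [hp]
  have h := congrArg (coeff · m) hcomp
  simp only [coeff_comp_neg_X, coeff_C_mul] at h
  rw [neg_one_pow_eq_pow_mod_two, neg_one_pow_eq_pow_mod_two (n := d)] at h
  have h2 : (2 : R) * p.coeff m = 0 := by
    rcases Nat.mod_two_eq_zero_or_one m with hm' | hm' <;>
      rw [hm', show d % 2 = 1 - m % 2 by omega, hm'] at h
    · linear_combination h
    · linear_combination -h
  simpa using h2

theorem exists_eq_X_pow_mul_expand_two {R : Type*} [CommSemiring R] {q : R[X]} {d : ℕ}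
    (hq : ∀ m, m % 2 ≠ d % 2 → q.coeff m = 0) : ∃ g : R[X], q = X ^ (d % 2) * expand R 2 g := by
  obtain ⟨q₁, rfl⟩ : X ^ (d % 2) ∣ q := X_pow_dvd_iff.2 fun m hm => hq m (by omega)
  refine ⟨contract 2 q₁, congrArg _ (ext fun n => ?_)⟩
  rw [coeff_expand two_pos, coeff_contract two_ne_zero]
  split_ifs with h
  · rw [Nat.div_mul_cancel h]
  · simpa [coeff_X_pow_mul', Nat.two_dvd_ne_zero.mp h] using hq (d % 2 + n) (by omega)

theorem coeff_ne_zero_of_roots_pos {R : Type*} [CommRing R] [LinearOrder R]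
    [IsStrictOrderedRing R] {g : R[X]} (hg : g ≠ 0) (hcard : Multiset.card g.roots = g.natDegree)
    (hpos : ∀ a ∈ g.roots, 0 < a) {k : ℕ} (hk : k ≤ g.natDegree) : g.coeff k ≠ 0 := by
  rw [coeff_eq_esymm_roots_of_card hcard hk]
  exact mul_ne_zero (mul_ne_zero (leadingCoeff_ne_zero.2 hg) (pow_ne_zero _ (by norm_num)))
    (Multiset.esymm_pos hpos (by omega)).ne'

theorem exists_roots_of_alternating {g : ℝ[X]} {n : ℕ} {y : ℕ → ℝ}
    (hy : StrictAntiOn y (Set.Iic n)) (halt : ∀ j ≤ n, 0 < (-1) ^ j * g.eval (y j)) :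
    ∃ s : Finset ℝ, s.card = n ∧ ∀ u ∈ s, g.IsRoot u ∧ y n < u := by
  have hroot : ∀ j < n, ∃ u ∈ Set.Ioo (y (j + 1)) (y j), g.IsRoot u := by
    intro j hj
    have hlt : y (j + 1) < y j := hy (by simp; omega) (by simp; omega) (by omega)
    have hsign : (-1) ^ j * g.eval (y (j + 1)) < 0 := by
      have := halt (j + 1) (by omega)
      rw [pow_succ] at this
      linarith
    obtain ⟨u, hu, hu0⟩ := intermediate_value_Ioo hlt.le
      (g.continuous.continuousOn.const_smul ((-1) ^ j : ℝ)) ⟨hsign, halt j (by omega)⟩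
    exact ⟨u, hu, by simpa using hu0⟩
  choose! u hu_mem hu_root using hroot
  have hanti : ∀ i < n, ∀ j < n, i < j → u j < u i := fun i hi j hj hij =>
    calc u j < y j := (hu_mem j hj).2
      _ ≤ y (i + 1) := hy.antitoneOn (by simp; omega) (by simp; omega) hij
      _ < u i := (hu_mem i hi).1
  refine ⟨(Finset.range n).image u, ?_, ?_⟩
  · rw [Finset.card_image_of_injOn, Finset.card_range]
    intro i hi j hj hij
    simp only [Finset.coe_range, Set.mem_Iio] at hi hj
    rcases lt_trichotomy i j with h | h | h
    · exact absurd hij (hanti i hi j hj h).ne'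
    · exact h
    · exact absurd hij (hanti j hj i hi h).ne
  · simp only [Finset.mem_image, Finset.mem_range, forall_exists_index, and_imp]
    rintro _ j hj rfl
    exact ⟨hu_root j hj,
      (hy.antitoneOn (by simp; omega) (by simp) (by omega)).trans_lt (hu_mem j hj).1⟩

theorem coeff_ne_zero_of_alternating {g : ℝ[X]} {n : ℕ} (hdeg : g.natDegree ≤ n) {y : ℕ → ℝ}
    (hy : StrictAntiOn y (Set.Iic n)) (hy0 : 0 ≤ y n)
    (halt : ∀ j ≤ n, 0 < (-1) ^ j * g.eval (y j)) {i : ℕ} (hi : i ≤ n) : g.coeff i ≠ 0 := by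
  obtain ⟨s, hcard, hs⟩ := exists_roots_of_alternating hy halt
  have hg : g ≠ 0 := by
    rintro rfl
    simpa using halt 0 (Nat.zero_le n)
  have hle : s.val ≤ g.roots :=
    (Multiset.le_iff_subset s.nodup).2 fun u hu => (mem_roots hg).2 (hs u hu).1
  have hroots : g.roots = s.val :=
    (Multiset.eq_of_le_of_card_le hle ((card_roots' g).trans (hdeg.trans hcard.ge))).symm
  have hnat : g.natDegree = n := le_antisymm hdeg (by simpa [hroots, hcard] using card_roots' g)
  refine coeff_ne_zero_of_roots_pos hg (by simp [hroots, hcard, hnat]) (fun a ha => ?_) (hnat ▸ hi)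
  rw [hroots] at ha
  exact hy0.trans_lt (hs a ha).2

section ParityPart

variable {K : Type*} [Field K]

noncomputable def parityPart (r : K[X]) (k : ℕ) : K[X] :=
  C 2⁻¹ * (r + C ((-1) ^ k) * r.comp (-X))

theorem eval_parityPart (r : K[X]) (k : ℕ) (t : K) :
    (parityPart r k).eval t = (r.eval t + (-1) ^ k * r.eval (-t)) / 2 := by
  simp [parityPart, div_eq_inv_mul]

theorem eval_neg_parityPart (r : K[X]) (k : ℕ) (t : K) :
    (parityPart r k).eval (-t) = (-1) ^ k * (parityPart r k).eval t := by
  have h : ((-1 : K) ^ k) ^ 2 = 1 := by rw [← pow_mul, pow_mul', neg_one_sq, one_pow]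
  rw [eval_parityPart, eval_parityPart, neg_neg]
  linear_combination (-r.eval (-t) / 2) * h

theorem coeff_parityPart [NeZero (2 : K)] (r : K[X]) (k m : ℕ) :
    (parityPart r k).coeff m = if m % 2 = k % 2 then r.coeff m else 0 := by
  simp only [parityPart, coeff_C_mul, coeff_add, coeff_comp_neg_X, ← mul_assoc, ← pow_add,
    neg_one_pow_eq_pow_mod_two (n := k + m)]
  split_ifs with h
  · rw [show (k + m) % 2 = 0 by omega]
    field_simp
    ring
  · rw [show (k + m) % 2 = 1 by omega]
    ring

end ParityPart

theorem abs_eval_parityPart_le {r : ℝ[X]} {M : ℝ} (hM : ∀ t, |t| ≤ 1 → |r.eval t| ≤ M) (k : ℕ)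
    (t : ℝ) (ht : |t| ≤ 1) : |(parityPart r k).eval t| ≤ M := by
  have h₁ := hM t ht
  have h₂ := hM (-t) (by rwa [abs_neg])
  rw [eval_parityPart, abs_div, abs_two, div_le_iff₀ two_pos]
  calc |r.eval t + (-1) ^ k * r.eval (-t)| ≤ |r.eval t| + |(-1) ^ k * r.eval (-t)| :=
        abs_add_le _ _
    _ ≤ M * 2 := by rw [abs_mul, abs_pow, abs_neg, abs_one, one_pow, one_mul]; linarith

end Polynomial

theorem two_mul_mul_pow_le_add_one_pow_sub_sub_one_pow {R : Type*} [CommRing R] [LinearOrder R]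
    [IsStrictOrderedRing R] {x : R} (hx : 0 ≤ x) (m : ℕ) :
    2 * (m + 1) * x ^ m ≤ (x + 1) ^ (m + 1) - (x - 1) ^ (m + 1) := by
  rw [add_pow, sub_eq_add_neg x, add_pow, ← Finset.sum_sub_distrib]
  have hterm : ∀ i ∈ Finset.range (m + 1 + 1), 0 ≤
      x ^ i * 1 ^ (m + 1 - i) * (m + 1).choose i - x ^ i * (-1) ^ (m + 1 - i) * (m + 1).choose i := by
    intro i _
    have hsign : (-1 : R) ^ (m + 1 - i) ≤ 1 := by
      rcases neg_one_pow_eq_or R (m + 1 - i) with h | h <;> norm_num [h]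
    have := mul_nonneg (mul_nonneg (pow_nonneg hx i) ((m + 1).choose i).cast_nonneg)
      (sub_nonneg.2 hsign)
    rw [one_pow, mul_one]
    linarith
  convert Finset.single_le_sum hterm (Finset.mem_range.2 (by omega : m < m + 1 + 1)) using 1
  simp only [add_tsub_cancel_left, mul_one, Nat.choose_succ_self_right, Nat.cast_add,
    Nat.cast_one, pow_one, mul_neg, neg_mul, sub_neg_eq_add]
  ring

namespace Polynomial.Chebyshev

theorem coeff_T_add_two_succ (n j : ℕ) :
    (T ℝ ↑(n + 2)).coeff (j + 1) = 2 * (T ℝ ↑(n + 1)).coeff j - (T ℝ n).coeff (j + 1) := by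
  push_cast
  rw [T_add_two, coeff_sub, mul_assoc, coeff_ofNat_mul, coeff_X_mul]

theorem coeff_T_add_two_zero (n : ℕ) : (T ℝ ↑(n + 2)).coeff 0 = -(T ℝ n).coeff 0 := by
  push_cast
  rw [T_add_two, coeff_sub, mul_assoc, coeff_ofNat_mul, coeff_X_mul_zero]
  ring

theorem abs_coeff_T_mul_factorial_le (n k : ℕ) :
    |(T ℝ n).coeff k| * k.factorial ≤ (n : ℝ) ^ k := by
  induction n using Nat.twoStepInduction generalizing k with
  | zero => rcases k with _ | k <;> simp [coeff_one]
  | one => rcases k with _ | _ | k <;> simp [coeff_X]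
  | more n ih₀ ih₁ =>
    rcases k with _ | j
    · simpa [coeff_T_add_two_zero] using ih₀ 0
    have hx := two_mul_mul_pow_le_add_one_pow_sub_sub_one_pow (x := (n + 1 : ℝ)) (by positivity) j
    rw [coeff_T_add_two_succ, Nat.factorial_succ, Nat.cast_mul]
    calc |2 * (T ℝ ↑(n + 1)).coeff j - (T ℝ n).coeff (j + 1)| * (↑(j + 1) * j.factorial)
        ≤ (2 * |(T ℝ ↑(n + 1)).coeff j| + |(T ℝ n).coeff (j + 1)|) * (↑(j + 1) * j.factorial) := by
          gcongr
          exact (abs_sub _ _).trans_eq (by rw [abs_mul, abs_two])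
      _ = 2 * (j + 1 : ℕ) * (|(T ℝ ↑(n + 1)).coeff j| * j.factorial)
          + |(T ℝ n).coeff (j + 1)| * (j + 1).factorial := by push_cast [Nat.factorial_succ]; ring
      _ ≤ 2 * (j + 1 : ℕ) * ((n + 1 : ℕ) : ℝ) ^ j + (n : ℝ) ^ (j + 1) := by
          gcongr
          exacts [ih₁ j, ih₀ (j + 1)]
      _ ≤ ((n + 2 : ℕ) : ℝ) ^ (j + 1) := by push_cast; ring_nf at hx ⊢; linarith

theorem T_natCast_eval_neg (n : ℕ) (t : ℝ) : (T ℝ n).eval (-t) = (-1) ^ n * (T ℝ n).eval t := by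
  rw [T_eval_neg, Int.cast_negOnePow_natCast]

theorem T_eval_cos_mul_pi_div {n j : ℕ} (hj : j ≤ n) :
    (T ℝ n).eval (cos (j * π / n)) = (-1) ^ j := by
  rcases Nat.eq_zero_or_pos n with rfl | hn
  · obtain rfl : j = 0 := by omega
    simp
  rw [T_real_cos, Int.cast_natCast, mul_div_cancel₀ _ (by positivity), cos_nat_mul_pi]

end Polynomial.Chebyshev

open Polynomial.Chebyshev

theorem natCast_mul_pi_div_mem_Icc {d j : ℕ} (hj : j ≤ d / 2) :
    (j : ℝ) * π / d ∈ Set.Icc 0 (π / 2) := by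
  refine ⟨by positivity, div_le_of_le_mul₀ (by positivity) (by positivity) ?_⟩
  have : (2 * j : ℝ) ≤ d := by exact_mod_cast (by omega : 2 * j ≤ d)
  nlinarith [pi_pos]

namespace Polynomial

theorem coeff_ne_zero_of_alternating_at_cos {q : ℝ[X]} {d : ℕ} (hdeg : q.natDegree ≤ d)
    (hpar : ∀ t, q.eval (-t) = (-1) ^ d * q.eval t)
    (halt : ∀ j ≤ d, 0 < (-1) ^ j * q.eval (cos (j * π / d))) {k : ℕ} (hkd : k ≤ d)
    (hk : k % 2 = d % 2) : q.coeff k ≠ 0 := by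
  obtain ⟨g, rfl⟩ := exists_eq_X_pow_mul_expand_two fun m hm => coeff_eq_zero_of_eval_neg hpar hm
  have hcoeff : ∀ i, (X ^ (d % 2) * expand ℝ 2 g).coeff (d % 2 + 2 * i) = g.coeff i := fun i => by
    rw [coeff_X_pow_mul', if_pos (by omega), Nat.add_sub_cancel_left, coeff_expand_mul' two_pos]
  have hgdeg : g.natDegree ≤ d / 2 := natDegree_le_iff_coeff_eq_zero.2 fun i hi => by
    rw [← hcoeff]
    exact coeff_eq_zero_of_natDegree_lt (by omega)
  have hcos_nonneg : ∀ j ≤ d / 2, 0 ≤ cos (j * π / d) := fun j hj =>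
    cos_nonneg_of_mem_Icc ⟨by linarith [pi_pos, (natCast_mul_pi_div_mem_Icc hj).1],
      (natCast_mul_pi_div_mem_Icc hj).2⟩
  have hy : StrictAntiOn (fun j : ℕ => cos (j * π / d) ^ 2) (Set.Iic (d / 2)) := by
    intro i hi j hj hij
    have hd : (0 : ℝ) < d := by exact_mod_cast (show 0 < d by simp at hj; omega)
    refine pow_lt_pow_left₀ (strictAntiOn_cos ?_ ?_ ?_) (hcos_nonneg j hj) two_ne_zero
    · exact Set.Icc_subset_Icc_right (by linarith [pi_pos]) (natCast_mul_pi_div_mem_Icc hi)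
    · exact Set.Icc_subset_Icc_right (by linarith [pi_pos]) (natCast_mul_pi_div_mem_Icc hj)
    · gcongr
  have hgalt : ∀ j ≤ d / 2, 0 < (-1) ^ j * g.eval (cos (j * π / d) ^ 2) := by
    intro j hj
    have h := halt j (by omega)
    rw [eval_mul, eval_pow, eval_X, expand_eval, mul_left_comm] at h
    exact pos_of_mul_pos_right h (pow_nonneg (hcos_nonneg j hj) _)
  obtain ⟨i, rfl⟩ : ∃ i, k = d % 2 + 2 * i := ⟨k / 2, by omega⟩
  rw [hcoeff]
  exact coeff_ne_zero_of_alternating hgdeg hy (sq_nonneg _) hgalt (by omega)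

theorem abs_coeff_le_abs_coeff_T_mul {d k : ℕ} (hkd : k ≤ d) (hk : k % 2 = d % 2) {r : ℝ[X]}
    (hdeg : r.natDegree ≤ d) (hpar : ∀ t, r.eval (-t) = (-1) ^ d * r.eval t) {M : ℝ}
    (hM : ∀ t, |t| ≤ 1 → |r.eval t| ≤ M) : |r.coeff k| ≤ |(T ℝ d).coeff k| * M := by
  by_contra! hlt
  have hc : r.coeff k ≠ 0 := by
    rintro hc
    rw [hc, abs_zero] at hlt
    exact hlt.not_ge (mul_nonneg (abs_nonneg _) ((abs_nonneg _).trans (hM 0 (by simp))))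
  set μ := (T ℝ d).coeff k / r.coeff k
  refine coeff_ne_zero_of_alternating_at_cos (q := T ℝ d - C μ * r) ?_ ?_ ?_ hkd hk ?_
  · exact (natDegree_sub_le _ _).trans
      (max_le (by rw [natDegree_T, Int.natAbs_natCast]) ((natDegree_C_mul_le _ _).trans hdeg))
  · intro t
    simp only [eval_sub, eval_mul, eval_C, T_natCast_eval_neg, hpar]
    ring
  · intro j hj
    set x := cos (j * π / d)
    have hsmall : |μ * r.eval x| < 1 := by
      rw [abs_mul, abs_div, div_mul_eq_mul_div, div_lt_one (abs_pos.2 hc)]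
      exact (mul_le_mul_of_nonneg_left (hM x (abs_cos_le_one _)) (abs_nonneg _)).trans_lt hlt
    have hsign : |(-1) ^ j * (μ * r.eval x)| = |μ * r.eval x| := by simp
    rw [eval_sub, eval_mul, eval_C, T_eval_cos_mul_pi_div hj, mul_sub, ← pow_add, ← two_mul,
      pow_mul, neg_one_sq, one_pow]
    linarith [le_abs_self ((-1) ^ j * (μ * r.eval x))]
  · rw [coeff_sub, coeff_C_mul, div_mul_cancel₀ _ hc, sub_self]

end Polynomial

/-- V. A. Markov's coefficient bound for polynomials on [-1,1]. -/
theorem markov_coefficient_bound (d : ℕ) (r : Polynomial ℝ) (hd : r.natDegree ≤ d)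
    (M : ℝ) (hM : ∀ t : ℝ, |t| ≤ 1 → |r.eval t| ≤ M) (k : ℕ) (hk : k ≤ d) :
    |r.coeff k| ≤ (d:ℝ) ^ k / (k.factorial : ℝ) * M ∧
      (d:ℝ) ^ k / (k.factorial : ℝ) * M ≤ Real.exp d * M := by
  have hM0 : 0 ≤ M := (abs_nonneg _).trans (hM 0 (by simp))
  refine ⟨?_, by gcongr; exact pow_div_factorial_le_exp _ d.cast_nonneg k⟩
  set d' := k + 2 * ((d - k) / 2)
  have hdeg : (parityPart r k).natDegree ≤ d' := natDegree_le_iff_coeff_eq_zero.2 fun m hm => by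
    rw [coeff_parityPart]
    split_ifs
    · exact coeff_eq_zero_of_natDegree_lt (by omega)
    · rfl
  have hpar : ∀ t, (parityPart r k).eval (-t) = (-1) ^ d' * (parityPart r k).eval t := by
    simp only [d', pow_add, pow_mul, neg_one_sq, one_pow, mul_one, eval_neg_parityPart, implies_true]
  calc |r.coeff k| = |(parityPart r k).coeff k| := by simp [coeff_parityPart]
    _ ≤ |(T ℝ d').coeff k| * M :=
        abs_coeff_le_abs_coeff_T_mul (by omega) (by omega) hdeg hpar (abs_eval_parityPart_le hM k)
    _ ≤ (d' : ℝ) ^ k / k.factorial * M := by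
        gcongr
        rw [le_div_iff₀ (by positivity)]
        exact abs_coeff_T_mul_factorial_le d' k
    _ ≤ (d : ℝ) ^ k / k.factorial * M := by gcongr; omega
end

section
/- Let s ∈ [0,1] and let X be any n×n matrix. The function s ↦ E trace((R_s X R_s)^p), where R_s is a random diagonal matrix with i.i.d. Bernoulli(s) diagonal entries and p is a positive integer, is a polynomial in s of degree at most p with zero constant term. -/
/-!
Expanding the trace of the `p`-th power over closed walks `v : Fin p → Fin n`, the walk `v`
contributes the product of the entries of `X` along it times the product of the selectors met
along it. That product is the indicator that every index visited by `v` is selected, whose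
expectation under i.i.d. Bernoulli(`s`) selectors is `s ^ k`, with `k` the number of distinct
indices visited, and `1 ≤ k ≤ p`.
-/

open scoped BigOperators

open Finset

namespace Matrix

variable {ι R : Type*} [Fintype ι] [DecidableEq ι] [CommSemiring R]

theorem pow_succ_apply_eq_sum_paths (A : Matrix ι ι R) (m : ℕ) (i j : ι) :
    (A ^ (m + 1)) i j =
      ∑ v : Fin m → ι,
        ∏ k, A (Fin.cons (α := fun _ => ι) i v k) (Fin.snoc (α := fun _ => ι) v j k) := by
  induction m generalizing i with
  | zero => simp [Fin.snoc]
  | succ m ih =>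
    rw [pow_succ', Matrix.mul_apply, ← (Fin.consEquiv fun _ => ι).sum_comp,
      Fintype.sum_prod_type]
    refine sum_congr rfl fun l _ => ?_
    rw [ih, mul_sum]
    refine sum_congr rfl fun v _ => ?_
    change _ = ∏ k, A (Fin.cons (α := fun _ => ι) i (Fin.cons l v) k)
      (Fin.snoc (α := fun _ => ι) (Fin.cons l v) j k)
    rw [← Fin.cons_snoc_eq_snoc_cons, Fin.prod_univ_succ (n := m + 1)]
    simp only [Fin.cons_zero, Fin.cons_succ]

def cycleProd {p : ℕ} (A : Matrix ι ι R) (v : Fin p → ι) : R :=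
  ∏ k, A (v k) (v (finRotate p k))

theorem trace_pow_eq_sum_cycleProd (A : Matrix ι ι R) {p : ℕ} (hp : p ≠ 0) :
    (A ^ p).trace = ∑ v : Fin p → ι, cycleProd A v := by
  obtain ⟨m, rfl⟩ := Nat.exists_eq_succ_of_ne_zero hp
  simp only [trace, diag, pow_succ_apply_eq_sum_paths,
    Fin.snoc_eq_cons_rotate, ← (Fin.consEquiv fun _ => ι).sum_comp, Fintype.sum_prod_type]
  rfl

section CyclePoly

open Polynomial

noncomputable def cyclePoly (A : Matrix ι ι R) (p : ℕ) : R[X] :=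
  ∑ v : Fin p → ι, monomial #(univ.image v) (cycleProd A v)

theorem natDegree_cyclePoly_le (A : Matrix ι ι R) (p : ℕ) : (cyclePoly A p).natDegree ≤ p :=
  natDegree_sum_le_of_forall_le _ _ fun _ _ =>
    (natDegree_monomial_le _).trans <| card_image_le.trans (card_fin p).le

theorem coeff_zero_cyclePoly (A : Matrix ι ι R) {p : ℕ} (hp : p ≠ 0) :
    (cyclePoly A p).coeff 0 = 0 := by
  have : NeZero p := ⟨hp⟩
  rw [cyclePoly, finsetSum_coeff]
  refine sum_eq_zero fun v _ => ?_
  rw [coeff_monomial, if_neg]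
  exact (card_pos.mpr (univ_nonempty.image v)).ne'

theorem eval_cyclePoly (A : Matrix ι ι R) (p : ℕ) (x : R) :
    (cyclePoly A p).eval x = ∑ v : Fin p → ι, cycleProd A v * x ^ #(univ.image v) := by
  simp [cyclePoly, eval_finsetSum]

end CyclePoly

end Matrix

theorem sum_bw_mul_boole_forall {n : ℕ} (s : ℝ) (S : Finset (Fin n)) :
    ∑ f : Fin n → Bool, bw s f * (if ∀ i ∈ S, f i = true then 1 else 0) = s ^ #S := by
  let g : Fin n → Bool → ℝ := fun i b =>
    (if b then s else 1 - s) * if i ∈ S → b then 1 else 0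
  have hfactor : ∀ i, ∑ b, g i b = if i ∈ S then s else 1 := by
    intro i
    by_cases hi : i ∈ S <;> simp [g, hi]
  calc ∑ f : Fin n → Bool, bw s f * (if ∀ i ∈ S, f i = true then 1 else 0)
      = ∑ f : Fin n → Bool, ∏ i, g i (f i) := by
        refine sum_congr rfl fun f _ => ?_
        rw [prod_mul_distrib, bw, prod_boole]
        simp
    _ = ∏ i, ∑ b, g i b := (Fintype.prod_sum g).symm
    _ = s ^ #S := by rw [Fintype.prod_congr _ _ hfactor, prod_ite_mem, univ_inter, prod_const]

theorem cycleProd_bernM_conj {n p : ℕ} (f : Fin n → Bool) (X : Matrix (Fin n) (Fin n) ℂ)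
    (v : Fin p → Fin n) :
    (bernM f * X * bernM f).cycleProd v =
      X.cycleProd v * if ∀ k, f (v k) = true then 1 else 0 := by
  -- each selector occurs twice around the cycle, and 0–1 values are idempotent
  have hrot :
      ∏ k, (if f (v (finRotate p k)) then (1 : ℂ) else 0) = ∏ k, if f (v k) then 1 else 0 :=
    Equiv.prod_comp (finRotate p) fun k => if f (v k) then (1 : ℂ) else 0
  simp only [Matrix.cycleProd, bernM, Matrix.mul_diagonal, Matrix.diagonal_mul, prod_mul_distrib,
    hrot]
  rw [prod_boole]
  simp only [mem_univ, true_implies]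
  split_ifs <;> ring

theorem sum_bw_mul_trace_pow_bernM_conj {n p : ℕ} (hp : p ≠ 0) (s : ℝ)
    (X : Matrix (Fin n) (Fin n) ℂ) :
    ∑ f : Fin n → Bool, (bw s f : ℂ) * ((bernM f * X * bernM f) ^ p).trace
      = ∑ v : Fin p → Fin n, X.cycleProd v * (s : ℂ) ^ #(univ.image v) := by
  simp only [Matrix.trace_pow_eq_sum_cycleProd _ hp, cycleProd_bernM_conj, mul_sum]
  rw [sum_comm]
  refine sum_congr rfl fun v _ => ?_
  have hsel (f : Fin n → Bool) :
      (∀ k, f (v k) = true) ↔ ∀ i ∈ univ.image v, f i = true := by simp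
  simp only [hsel, mul_left_comm _ (X.cycleProd v), ← mul_sum]
  congr 1
  rw [← Complex.ofReal_pow, ← sum_bw_mul_boole_forall s (univ.image v)]
  push_cast [apply_ite Complex.ofReal]
  rfl

/-- The expected trace of (R_s X R_s)^p is a polynomial in s of degree ≤ p with no constant term. -/
theorem trace_is_polynomial (n p : ℕ) (hp : 0 < p) (X : Matrix (Fin n) (Fin n) ℂ) :
    ∃ q : Polynomial ℂ, q.natDegree ≤ p ∧ q.coeff 0 = 0 ∧
      ∀ s : ℝ, s ∈ Set.Icc (0:ℝ) 1 →
        (∑ f : Fin n → Bool, (bw s f : ℂ) * ((bernM f * X * bernM f) ^ p).trace)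
          = q.eval (s : ℂ) := by
  refine ⟨X.cyclePoly p, X.natDegree_cyclePoly_le p, X.coeff_zero_cyclePoly hp.ne',
    fun s _ => ?_⟩
  rw [X.eval_cyclePoly, sum_bw_mul_trace_pow_bernM_conj hp.ne']
end
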